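/- For the Frank–Wolfe iterates, define E(t_j) = a_{t_j} F(x(t_j)) − √a_{t_j} F(x*) where √a_{t_j} = e^{t_j/(1+t_j)} and a_{t_j} = e^{2t_j/(1+t_j)}. Then for every j ∈ {0,…,T−1}, E(t_{j+1}) − E(t_j) ≥ √a_{t_j} (√(a_{t_{j+1}}/a_{t_j}) − 1)² (F(x*) − √a_{t_j} F(x(t_j))) − (nL/2)(√a_{t_{j+1}} − √a_{t_j})². -/

import Mathlib

/-- The harmonic number `H j = ∑_{k=1}^j 1/k` (with `H 0 = 0`). -/
noncomputable def harmonicNum (j : ℕ) : ℝ := ∑ k ∈ Finset.range j, (1 : ℝ) / (k + 1)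

/-- `H_{2,j} = ∑_{k=1}^j 1/k²`. -/
noncomputable def harmonicNum2 (j : ℕ) : ℝ := ∑ k ∈ Finset.range j, (1 : ℝ) / ((k : ℝ) + 1) ^ 2

/-- The time values `t_j = 1/(1 - ln(1 + H_j/H_T)) - 1` of the Frank–Wolfe algorithm. -/
noncomputable def fwTime (T j : ℕ) : ℝ :=
  1 / (1 - Real.log (1 + harmonicNum j / harmonicNum T)) - 1

/-- The Frank–Wolfe step ratio `e^{-1/(1+t_j) + 1/(1+t_{j+1})}`. -/
noncomputable def fwRatio (T j : ℕ) : ℝ :=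
  Real.exp (-(1 / (1 + fwTime T j)) + 1 / (1 + fwTime T (j + 1)))

/-- `√a_{t_j} = e^{t_j/(1+t_j)}`. -/
noncomputable def fwSqa (T j : ℕ) : ℝ := Real.exp (fwTime T j / (1 + fwTime T j))

/-- `F : [0,1]^n → ℝ` is DR-submodular: for all `x ≤ y` in `[0,1]^n`, coordinates `i` and
`a > 0` with `x + a·e_i, y + a·e_i ∈ [0,1]^n`, one has
`F(x + a·e_i) - F(x) ≥ F(y + a·e_i) - F(y)`. -/
def DRSubmodular {n : ℕ} (F : (Fin n → ℝ) → ℝ) : Prop :=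
  ∀ x y : Fin n → ℝ, x ∈ Set.Icc (0 : Fin n → ℝ) 1 → y ∈ Set.Icc (0 : Fin n → ℝ) 1 →
    x ≤ y → ∀ i : Fin n, ∀ a : ℝ, 0 < a →
      x + a • (Pi.single i 1 : Fin n → ℝ) ∈ Set.Icc (0 : Fin n → ℝ) 1 →
      y + a • (Pi.single i 1 : Fin n → ℝ) ∈ Set.Icc (0 : Fin n → ℝ) 1 →
      F (y + a • (Pi.single i 1 : Fin n → ℝ)) - F y ≤
        F (x + a • (Pi.single i 1 : Fin n → ℝ)) - F x

/-- The continuous linear map `y ↦ ⟨g, y⟩ = ∑ i, g i * y i` on `ℝⁿ`. -/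
noncomputable def gradCLM {n : ℕ} (g : Fin n → ℝ) : (Fin n → ℝ) →L[ℝ] ℝ :=
  ∑ i, g i • (ContinuousLinearMap.proj i : (Fin n → ℝ) →L[ℝ] ℝ)

/-- `gradF` is the gradient of `F` on the box `[0,1]^n`: at each point of the box, `F` is
differentiable within the box with derivative `y ↦ ⟨gradF z, y⟩`. -/
def HasGradientOnBox {n : ℕ} (F : (Fin n → ℝ) → ℝ) (gradF : (Fin n → ℝ) → Fin n → ℝ) : Prop :=
  ∀ z ∈ Set.Icc (0 : Fin n → ℝ) 1, HasFDerivWithinAt F (gradCLM (gradF z)) (Set.Icc 0 1) z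

/-!
Along nonnegative directions a DR-submodular function is concave: its gradient is antitone for the
coordinatewise order, so the mean value theorem turns each chord into a gradient bound. Chords from
`x` to `x ⊔ x*` and from `x ⊓ x*` to `x` give `⟨∇F(x), x* - x⟩ ≥ F(x ⊔ x*) + F(x ⊓ x*) - 2 F(x)`,
and concavity on the ray from `x*` through `x ⊔ x*`, with `F ≥ 0` at its far end, gives
`F(x ⊔ x*) ≥ (1 - maxᵢ xᵢ) F(x*)`. By induction `x(t_j)ᵢ ≤ 1 - 1/√a_{t_j}`, so the Frank–Wolfe
direction gains at least `F(x*)/√a_{t_j} - 2 F(x(t_j))`. Inserting this into the `L`-smoothness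
lower bound for the step `(1 - √a_{t_j}/√a_{t_{j+1}}) (v_j - x(t_j))` and multiplying by
`a_{t_{j+1}}` gives the claimed increment bound, with equality in the algebra.
-/

open Set

section GradientOnBox

variable {n : ℕ} {F : (Fin n → ℝ) → ℝ} {gradF : (Fin n → ℝ) → Fin n → ℝ}

lemma gradCLM_apply (g u : Fin n → ℝ) : gradCLM g u = ∑ i, g i * u i := by
  simp [gradCLM]

lemma HasGradientOnBox.hasDerivWithinAt_line (hgrad : HasGradientOnBox F gradF)
    {z u : Fin n → ℝ} {S : Set ℝ} (hS : ∀ s ∈ S, z + s • u ∈ Icc 0 1) {c : ℝ} (hc : c ∈ S) :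
    HasDerivWithinAt (fun s => F (z + s • u)) (∑ i, gradF (z + c • u) i * u i) S c := by
  have hline : HasDerivAt (fun s : ℝ => z + s • u) u c := by
    simpa using ((hasDerivAt_id c).smul_const u).const_add z
  simpa [Function.comp_def, gradCLM_apply] using
    (hgrad _ (hS c hc)).comp_hasDerivWithinAt c hline.hasDerivWithinAt hS

lemma HasGradientOnBox.exists_sub_eq_inner (hgrad : HasGradientOnBox F gradF)
    {z w : Fin n → ℝ} (hz : z ∈ Icc 0 1) (hw : w ∈ Icc 0 1) :
    ∃ c ∈ Ioo (0 : ℝ) 1, F w - F z = ∑ i, gradF (z + c • (w - z)) i * (w i - z i) := by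
  have hseg : ∀ s ∈ Icc (0 : ℝ) 1, z + s • (w - z) ∈ Icc 0 1 :=
    fun s hs => (convex_Icc 0 1).add_smul_sub_mem hz hw hs
  have hderiv := fun c (hc : c ∈ Icc (0 : ℝ) 1) => hgrad.hasDerivWithinAt_line hseg hc
  obtain ⟨c, hc, hslope⟩ := exists_hasDerivAt_eq_slope (fun s => F (z + s • (w - z)))
    (fun c => ∑ i, gradF (z + c • (w - z)) i * (w - z) i) zero_lt_one
    (fun c hc => (hderiv c hc).continuousWithinAt)
    (fun c hc => (hderiv c (Ioo_subset_Icc_self hc)).hasDerivAt (Icc_mem_nhds hc.1 hc.2))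
  refine ⟨c, hc, ?_⟩
  simpa using hslope.symm

lemma mem_Icc_apply {z : Fin n → ℝ} (hz : z ∈ Icc 0 1) (i : Fin n) : z i ∈ Icc 0 1 :=
  ⟨hz.1 i, hz.2 i⟩

lemma add_smul_single_mem_Icc {z : Fin n → ℝ} (hz : z ∈ Icc 0 1) {i : Fin n} {b : ℝ}
    (h0 : 0 ≤ z i + b) (h1 : z i + b ≤ 1) : z + b • Pi.single i 1 ∈ Icc 0 1 := by
  refine ⟨fun k => ?_, fun k => ?_⟩ <;> rcases eq_or_ne k i with rfl | hk <;>
    simp [*, (mem_Icc_apply hz k).1, (mem_Icc_apply hz k).2]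

lemma DRSubmodular.gradF_le_of_sub_lt_one (hDR : DRSubmodular F)
    (hgrad : HasGradientOnBox F gradF) {x y : Fin n → ℝ} (hx : x ∈ Icc 0 1) (hy : y ∈ Icc 0 1)
    (hxy : x ≤ y) {i : Fin n} (hi : y i - x i < 1) : gradF y i ≤ gradF x i := by
  set e : Fin n → ℝ := Pi.single i 1
  set S := Icc (-x i) (1 - y i)
  have hxS : ∀ b ∈ S, x + b • e ∈ Icc 0 1 := fun b hb =>
    add_smul_single_mem_Icc hx (by linarith [hb.1]) (by linarith [hb.2, hxy i])
  have hyS : ∀ b ∈ S, y + b • e ∈ Icc 0 1 := fun b hb =>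
    add_smul_single_mem_Icc hy (by linarith [hb.1, hxy i]) (by linarith [hb.2])
  have h0S : (0 : ℝ) ∈ S :=
    ⟨by linarith [(mem_Icc_apply hx i).1], by linarith [(mem_Icc_apply hy i).2]⟩
  -- DR-submodularity says exactly that `b ↦ F (x + b e) - F (y + b e)` is monotone.
  have hmono : MonotoneOn (fun b => F (x + b • e) - F (y + b • e)) S := by
    intro b hb b' hb' hbb'
    rcases hbb'.eq_or_lt with rfl | hlt
    · rfl
    have hshift : ∀ z : Fin n → ℝ, z + b • e + (b' - b) • e = z + b' • e := fun z => by
      rw [add_assoc, ← add_smul, add_sub_cancel]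
    have := hDR _ _ (hxS b hb) (hyS b hb) (add_le_add_left hxy _) i (b' - b) (sub_pos.2 hlt)
      (by rw [hshift]; exact hxS b' hb') (by rw [hshift]; exact hyS b' hb')
    rw [hshift, hshift] at this
    linarith
  have hderiv : HasDerivWithinAt (fun b => F (x + b • e) - F (y + b • e))
      (gradF x i - gradF y i) S 0 := by
    simpa [e, Pi.single_apply] using
      (hgrad.hasDerivWithinAt_line hxS h0S).fun_sub (hgrad.hasDerivWithinAt_line hyS h0S)
  have := hderiv.derivWithin (uniqueDiffOn_Icc (by linarith) 0 h0S) ▸ hmono.derivWithin_nonneg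
  linarith

lemma DRSubmodular.gradF_antitone (hDR : DRSubmodular F) (hgrad : HasGradientOnBox F gradF)
    {x y : Fin n → ℝ} (hx : x ∈ Icc 0 1) (hy : y ∈ Icc 0 1) (hxy : x ≤ y) (i : Fin n) :
    gradF y i ≤ gradF x i := by
  -- Passing through the midpoint in coordinate `i` avoids the case `x i = 0`, `y i = 1`.
  set m := Function.update y i ((x i + y i) / 2)
  have hxi := hxy i
  have hxi0 := (mem_Icc_apply hx i).1
  have hyi1 := (mem_Icc_apply hy i).2
  have hxm : x ≤ m := fun k => by
    rcases eq_or_ne k i with rfl | hk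
    · simp [m]; linarith
    · simpa [m, hk] using hxy k
  have hmy : m ≤ y := fun k => by
    rcases eq_or_ne k i with rfl | hk
    · simp [m]; linarith
    · simp [m, hk]
  have hm : m ∈ Icc 0 1 := ⟨hx.1.trans hxm, hmy.trans hy.2⟩
  have hmi : m i = (x i + y i) / 2 := by simp [m]
  exact (hDR.gradF_le_of_sub_lt_one hgrad hm hy hmy (by linarith)).trans
    (hDR.gradF_le_of_sub_lt_one hgrad hx hm hxm (by linarith))

lemma DRSubmodular.inner_gradF_antitone (hDR : DRSubmodular F)
    (hgrad : HasGradientOnBox F gradF) {x y : Fin n → ℝ} (hx : x ∈ Icc 0 1) (hy : y ∈ Icc 0 1)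
    (hxy : x ≤ y) {u : Fin n → ℝ} (hu : 0 ≤ u) :
    ∑ i, gradF y i * u i ≤ ∑ i, gradF x i * u i :=
  Finset.sum_le_sum fun i _ =>
    mul_le_mul_of_nonneg_right (hDR.gradF_antitone hgrad hx hy hxy i) (hu i)

lemma DRSubmodular.sub_le_inner_gradF (hDR : DRSubmodular F) (hgrad : HasGradientOnBox F gradF)
    {z w : Fin n → ℝ} (hz : z ∈ Icc 0 1) (hw : w ∈ Icc 0 1) (hzw : z ≤ w) :
    F w - F z ≤ ∑ i, gradF z i * (w i - z i) := by
  obtain ⟨c, hc, hmvt⟩ := hgrad.exists_sub_eq_inner hz hw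
  have hu : 0 ≤ w - z := sub_nonneg.2 hzw
  have hzc : z ≤ z + c • (w - z) := le_add_of_nonneg_right (smul_nonneg hc.1.le hu)
  rw [hmvt]
  exact hDR.inner_gradF_antitone hgrad hz ((convex_Icc 0 1).add_smul_sub_mem hz hw
    (Ioo_subset_Icc_self hc)) hzc hu

lemma DRSubmodular.inner_gradF_le_sub (hDR : DRSubmodular F) (hgrad : HasGradientOnBox F gradF)
    {z w : Fin n → ℝ} (hz : z ∈ Icc 0 1) (hw : w ∈ Icc 0 1) (hzw : z ≤ w) :
    ∑ i, gradF w i * (w i - z i) ≤ F w - F z := by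
  obtain ⟨c, hc, hmvt⟩ := hgrad.exists_sub_eq_inner hz hw
  have hu : 0 ≤ w - z := sub_nonneg.2 hzw
  have hcw : z + c • (w - z) ≤ w := by
    calc z + c • (w - z) ≤ z + (1 : ℝ) • (w - z) := by gcongr; exact hc.2.le
      _ = w := by simp
  rw [hmvt]
  exact hDR.inner_gradF_antitone hgrad ((convex_Icc 0 1).add_smul_sub_mem hz hw
    (Ioo_subset_Icc_self hc)) hw hcw hu

lemma DRSubmodular.sup_add_inf_sub_le_inner (hDR : DRSubmodular F)
    (hgrad : HasGradientOnBox F gradF) {x y : Fin n → ℝ} (hx : x ∈ Icc 0 1) (hy : y ∈ Icc 0 1) :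
    F (x ⊔ y) + F (x ⊓ y) - 2 * F x ≤ ∑ i, gradF x i * (y i - x i) := by
  have hsup := hDR.sub_le_inner_gradF hgrad hx ⟨le_sup_of_le_left hx.1, sup_le hx.2 hy.2⟩
    le_sup_left
  have hinf := hDR.inner_gradF_le_sub hgrad ⟨le_inf hx.1 hy.1, inf_le_of_left_le hx.2⟩ hx
    inf_le_left
  have hsplit : ∑ i, gradF x i * (y i - x i) =
      ∑ i, gradF x i * ((x ⊔ y) i - x i) - ∑ i, gradF x i * (x i - (x ⊓ y) i) := by
    rw [← Finset.sum_sub_distrib]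
    refine Finset.sum_congr rfl fun i _ => ?_
    rcases le_total (x i) (y i) with h | h <;> simp [h]; ring
  linarith

lemma DRSubmodular.one_sub_mul_add_mul_le (hDR : DRSubmodular F)
    (hgrad : HasGradientOnBox F gradF)
    {z p : Fin n → ℝ} (hz : z ∈ Icc 0 1) (hp : p ∈ Icc 0 1) (hzp : z ≤ p) {θ : ℝ}
    (hθ : θ ∈ Icc (0 : ℝ) 1) :
    (1 - θ) * F z + θ * F p ≤ F (z + θ • (p - z)) := by
  set w := z + θ • (p - z)
  have hw : w ∈ Icc 0 1 := (convex_Icc 0 1).add_smul_sub_mem hz hp hθ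
  have hzw : z ≤ w := le_add_of_nonneg_right (smul_nonneg hθ.1 (sub_nonneg.2 hzp))
  have hwp : w ≤ p := by
    calc z + θ • (p - z) ≤ z + (1 : ℝ) • (p - z) := by gcongr; exact hθ.2
      _ = p := by simp
  set G := ∑ i, gradF w i * (p i - z i)
  have hleft : θ * G ≤ F w - F z := by
    have h := hDR.inner_gradF_le_sub hgrad hz hw hzw
    have : ∑ i, gradF w i * (w i - z i) = θ * G := by
      rw [Finset.mul_sum]
      refine Finset.sum_congr rfl fun i _ => ?_
      simp only [w, Pi.add_apply, Pi.smul_apply, Pi.sub_apply, smul_eq_mul]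
      ring
    linarith
  have hright : F p - F w ≤ (1 - θ) * G := by
    have h := hDR.sub_le_inner_gradF hgrad hw hp hwp
    have : ∑ i, gradF w i * (p i - w i) = (1 - θ) * G := by
      rw [Finset.mul_sum]
      refine Finset.sum_congr rfl fun i _ => ?_
      simp only [w, Pi.add_apply, Pi.smul_apply, Pi.sub_apply, smul_eq_mul]
      ring
    linarith
  nlinarith [mul_le_mul_of_nonneg_left hleft (sub_nonneg.2 hθ.2),
    mul_le_mul_of_nonneg_left hright hθ.1]

lemma DRSubmodular.mul_le_sup (hDR : DRSubmodular F) (hgrad : HasGradientOnBox F gradF)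
    (hFnonneg : ∀ z ∈ Icc (0 : Fin n → ℝ) 1, 0 ≤ F z) {x y : Fin n → ℝ} (hy : y ∈ Icc 0 1)
    {θ : ℝ} (hθ0 : 0 ≤ θ) (hθ1 : θ ≤ 1) (hxθ : ∀ i, x i ≤ 1 - θ) :
    θ * F y ≤ F (x ⊔ y) := by
  obtain ⟨δ, rfl⟩ : ∃ δ, θ = 1 - δ := ⟨1 - θ, by ring⟩
  simp only [sub_sub_cancel] at hxθ
  rcases (show 0 ≤ δ by linarith).eq_or_lt with rfl | hδ
  · have hxy : x ≤ y := fun i => (hxθ i).trans (mem_Icc_apply hy i).1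
    rw [sup_eq_right.2 hxy, sub_zero, one_mul]
  -- `x ⊔ y` divides the segment from `y` to `p` in the ratio `δ : 1 - δ`, and `F p ≥ 0`.
  set p := y + δ⁻¹ • (x ⊔ y - y)
  have hyp : y ≤ p := le_add_of_nonneg_right (smul_nonneg (inv_nonneg.2 hδ.le)
    (sub_nonneg.2 le_sup_right))
  have hp : p ∈ Icc 0 1 := by
    refine ⟨hy.1.trans hyp, fun i => ?_⟩
    obtain ⟨hyi0, hyi1⟩ := mem_Icc_apply hy i
    have hmax : max (x i) (y i) - y i ≤ δ * (1 - y i) := by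
      rw [sub_le_iff_le_add, max_le_iff]
      constructor <;> nlinarith [hxθ i]
    have := mul_le_mul_of_nonneg_left hmax (inv_nonneg.2 hδ.le)
    simp only [p, Pi.add_apply, Pi.smul_apply, Pi.sub_apply, Pi.sup_apply, smul_eq_mul,
      Pi.one_apply]
    rw [inv_mul_cancel_left₀ hδ.ne'] at this
    linarith
  have hsup : y + δ • (p - y) = x ⊔ y := by
    rw [add_sub_cancel_left, smul_inv_smul₀ hδ.ne', add_sub_cancel]
  have := hDR.one_sub_mul_add_mul_le hgrad hy hp hyp ⟨hδ.le, by linarith⟩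
  rw [hsup] at this
  nlinarith [hFnonneg p hp]

lemma DRSubmodular.mul_sub_two_mul_le_inner (hDR : DRSubmodular F)
    (hgrad : HasGradientOnBox F gradF) (hFnonneg : ∀ z ∈ Icc (0 : Fin n → ℝ) 1, 0 ≤ F z)
    {x y : Fin n → ℝ} (hx : x ∈ Icc 0 1) (hy : y ∈ Icc 0 1) {θ : ℝ} (hθ0 : 0 ≤ θ)
    (hθ1 : θ ≤ 1) (hxθ : ∀ i, x i ≤ 1 - θ) :
    θ * F y - 2 * F x ≤ ∑ i, gradF x i * (y i - x i) := by
  have hlattice := hDR.sup_add_inf_sub_le_inner hgrad hx hy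
  have hsup := hDR.mul_le_sup hgrad hFnonneg hy hθ0 hθ1 hxθ
  have hinf := hFnonneg (x ⊓ y) ⟨le_inf hx.1 hy.1, inf_le_of_left_le hx.2⟩
  linarith

lemma sum_sq_sub_le_card {z v : Fin n → ℝ} (hz : z ∈ Icc 0 1) (hv : v ∈ Icc 0 1) :
    ∑ i, (v i - z i) ^ 2 ≤ n := by
  calc ∑ i, (v i - z i) ^ 2 ≤ ∑ _i : Fin n, (1 : ℝ) := Finset.sum_le_sum fun i _ => by
        obtain ⟨hz0, hz1⟩ := mem_Icc_apply hz i
        obtain ⟨hv0, hv1⟩ := mem_Icc_apply hv i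
        nlinarith
    _ = n := by simp

lemma le_add_smul_sub_of_smooth {L : ℝ} (hL : 0 ≤ L)
    (hsmooth : ∀ z ∈ Icc (0 : Fin n → ℝ) 1, ∀ w ∈ Icc (0 : Fin n → ℝ) 1,
      |F w - F z - ∑ i, gradF z i * (w i - z i)| ≤ L / 2 * ∑ i, (w i - z i) ^ 2)
    {z v : Fin n → ℝ} (hz : z ∈ Icc 0 1) (hv : v ∈ Icc 0 1) {γ : ℝ} (hγ : γ ∈ Icc (0 : ℝ) 1) :
    F z + γ * ∑ i, gradF z i * (v i - z i) - n * L / 2 * γ ^ 2 ≤ F (z + γ • (v - z)) := by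
  have hw : z + γ • (v - z) ∈ Icc 0 1 := (convex_Icc 0 1).add_smul_sub_mem hz hv hγ
  have h := (abs_le.1 (hsmooth z hz _ hw)).1
  simp only [Pi.add_apply, Pi.smul_apply, Pi.sub_apply, smul_eq_mul, add_sub_cancel_left,
    mul_pow, ← Finset.mul_sum, mul_left_comm _ γ] at h
  have hsq := mul_le_mul_of_nonneg_left (sum_sq_sub_le_card hz hv)
    (by positivity : 0 ≤ L / 2 * γ ^ 2)
  linarith

end GradientOnBox

section Schedule

open Real

lemma harmonicNum_mono : Monotone harmonicNum := fun _ _ hab =>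
  Finset.sum_le_sum_of_subset_of_nonneg (Finset.range_subset_range.2 hab) fun _ _ _ => by
    positivity

lemma harmonicNum_nonneg (j : ℕ) : 0 ≤ harmonicNum j := by
  unfold harmonicNum
  positivity

lemma harmonicNum_div_mem_Icc {T j : ℕ} (hj : j ≤ T) :
    harmonicNum j / harmonicNum T ∈ Icc (0 : ℝ) 1 :=
  ⟨div_nonneg (harmonicNum_nonneg j) (harmonicNum_nonneg T),
    div_le_one_of_le₀ (harmonicNum_mono hj) (harmonicNum_nonneg T)⟩

lemma one_div_one_add_fwTime (T j : ℕ) :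
    1 / (1 + fwTime T j) = 1 - log (1 + harmonicNum j / harmonicNum T) := by
  rw [fwTime, add_sub_cancel, one_div_one_div]

lemma fwSqa_eq {T j : ℕ} (hj : j ≤ T) : fwSqa T j = 1 + harmonicNum j / harmonicNum T := by
  obtain ⟨hr0, hr1⟩ := harmonicNum_div_mem_Icc hj
  have hlog : log (1 + harmonicNum j / harmonicNum T) < 1 :=
    (log_le_log (by linarith) (by linarith : _ ≤ (2 : ℝ))).trans_lt
      (log_two_lt_d9.trans (by norm_num))
  have hd : 0 < 1 / (1 + fwTime T j) := by rw [one_div_one_add_fwTime]; linarith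
  have hpos : 0 < 1 + fwTime T j := one_div_pos.1 hd
  have htime : fwTime T j / (1 + fwTime T j) = 1 - 1 / (1 + fwTime T j) := by
    field_simp
    ring
  rw [fwSqa, htime, one_div_one_add_fwTime, sub_sub_cancel, exp_log (by linarith)]

lemma one_le_fwSqa {T j : ℕ} (hj : j ≤ T) : 1 ≤ fwSqa T j := by
  rw [fwSqa_eq hj]
  linarith [(harmonicNum_div_mem_Icc hj).1]

lemma fwSqa_le_succ {T j : ℕ} (hj : j < T) : fwSqa T j ≤ fwSqa T (j + 1) := by
  rw [fwSqa_eq hj.le, fwSqa_eq hj]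
  gcongr
  · exact harmonicNum_nonneg T
  · exact harmonicNum_mono (Nat.le_succ j)

lemma fwRatio_eq {T j : ℕ} (hj : j < T) : fwRatio T j = fwSqa T j / fwSqa T (j + 1) := by
  have hpos : ∀ k ≤ T, 0 < 1 + harmonicNum k / harmonicNum T := fun k hk => by
    linarith [(harmonicNum_div_mem_Icc hk).1]
  rw [fwRatio, one_div_one_add_fwTime, one_div_one_add_fwTime, fwSqa_eq hj.le, fwSqa_eq hj,
    show ∀ a b : ℝ, -(1 - a) + (1 - b) = a - b by intros; ring, exp_sub,
    exp_log (hpos j hj.le), exp_log (hpos (j + 1) hj)]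

lemma fwRatio_mem_Icc {T j : ℕ} (hj : j < T) : fwRatio T j ∈ Icc (0 : ℝ) 1 := by
  have hs := one_le_fwSqa hj.le
  have hss' := fwSqa_le_succ hj
  rw [fwRatio_eq hj]
  exact ⟨div_nonneg (by linarith) (by linarith), div_le_one_of_le₀ hss' (by linarith)⟩

end Schedule

section FrankWolfe

variable {n : ℕ}

lemma fw_iterate_mem_and_le {T : ℕ} {x v : ℕ → Fin n → ℝ} (hx0 : x 0 = 0)
    (hv : ∀ j < T, v j ∈ Icc 0 1)
    (hstep : ∀ j < T, x (j + 1) = fwRatio T j • x j + (1 - fwRatio T j) • v j) :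
    ∀ j ≤ T, x j ∈ Icc 0 1 ∧ ∀ i, x j i ≤ 1 - 1 / fwSqa T j
  | 0, _ => by
    have h0 : fwSqa T 0 = 1 := by simp [fwSqa_eq (Nat.zero_le T), harmonicNum]
    rw [hx0]
    exact ⟨⟨le_rfl, zero_le_one⟩, fun i => by simp [h0]⟩
  | j + 1, hj => by
    obtain ⟨hxj, hxj_le⟩ := fw_iterate_mem_and_le hx0 hv hstep j (Nat.le_of_succ_le hj)
    obtain ⟨hρ0, hρ1⟩ := fwRatio_mem_Icc hj
    have hs : 1 ≤ fwSqa T j := one_le_fwSqa (Nat.le_of_succ_le hj)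
    rw [hstep j hj]
    refine ⟨convex_Icc 0 1 hxj (hv j hj) hρ0 (sub_nonneg.2 hρ1) (add_sub_cancel _ _),
      fun i => ?_⟩
    have hvi := (mem_Icc_apply (hv j hj) i).2
    have hcancel : fwRatio T j * (1 / fwSqa T j) = 1 / fwSqa T (j + 1) := by
      rw [fwRatio_eq hj]; field_simp
    simp only [Pi.add_apply, Pi.smul_apply, smul_eq_mul]
    nlinarith [mul_le_mul_of_nonneg_left (hxj_le i) hρ0,
      mul_le_mul_of_nonneg_left hvi (sub_nonneg.2 hρ1)]

lemma lyapunov_increment_ge {s s' c F₀ F₁ Fstar D : ℝ} (hs : 0 < s) (hss' : s ≤ s')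
    (hstep : F₀ + (1 - s / s') * D - c * (1 - s / s') ^ 2 ≤ F₁)
    (hD : 1 / s * Fstar - 2 * F₀ ≤ D) :
    s' ^ 2 * F₁ - s' * Fstar - (s ^ 2 * F₀ - s * Fstar) ≥
      s * (s' / s - 1) ^ 2 * (Fstar - s * F₀) - c * (s' - s) ^ 2 := by
  have hs' : 0 < s' := hs.trans_le hss'
  have h₁ : s' ^ 2 * F₀ + s' * (s' - s) * D - c * (s' - s) ^ 2 ≤ s' ^ 2 * F₁ := by
    calc _ = s' ^ 2 * (F₀ + (1 - s / s') * D - c * (1 - s / s') ^ 2) := by field_simp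
      _ ≤ _ := mul_le_mul_of_nonneg_left hstep (sq_nonneg s')
  have h₂ := mul_le_mul_of_nonneg_left hD (by nlinarith : 0 ≤ s' * (s' - s))
  calc s * (s' / s - 1) ^ 2 * (Fstar - s * F₀) - c * (s' - s) ^ 2
      = s' ^ 2 * F₀ + s' * (s' - s) * (1 / s * Fstar - 2 * F₀) - c * (s' - s) ^ 2
          - s' * Fstar - (s ^ 2 * F₀ - s * Fstar) := by field_simp; ring
    _ ≤ _ := by linarith

end FrankWolfe

theorem fw_lyapunov_increment_bound_general
    (n : ℕ) (F : (Fin n → ℝ) → ℝ) (gradF : (Fin n → ℝ) → Fin n → ℝ)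
    (L : ℝ) (hL : 0 ≤ L)
    (hFnonneg : ∀ z ∈ Set.Icc (0 : Fin n → ℝ) 1, 0 ≤ F z)
    (hDR : DRSubmodular F)
    (hgrad : HasGradientOnBox F gradF)
    (hsmooth : ∀ z ∈ Set.Icc (0 : Fin n → ℝ) 1, ∀ w ∈ Set.Icc (0 : Fin n → ℝ) 1,
      |F w - F z - ∑ i, gradF z i * (w i - z i)| ≤ L / 2 * ∑ i, (w i - z i) ^ 2)
    (P : Set (Fin n → ℝ)) (hPsub : P ⊆ Set.Icc 0 1)
    (xstar : Fin n → ℝ) (hxstarP : xstar ∈ P)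
    (T : ℕ)
    (x v : ℕ → Fin n → ℝ)
    (hx0 : x 0 = 0)
    (hvP : ∀ j < T, v j ∈ P)
    (hvmax : ∀ j < T, ∀ w ∈ P, ∑ i, gradF (x j) i * w i ≤ ∑ i, gradF (x j) i * v j i)
    (hstep : ∀ j < T, x (j + 1) = fwRatio T j • x j + (1 - fwRatio T j) • v j)
    (E : ℕ → ℝ)
    (hE : ∀ j, E j = fwSqa T j ^ 2 * F (x j) - fwSqa T j * F xstar) :
    ∀ j < T,
      E (j + 1) - E j ≥
        fwSqa T j * (fwSqa T (j + 1) / fwSqa T j - 1) ^ 2 *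
            (F xstar - fwSqa T j * F (x j)) -
          (n : ℝ) * L / 2 * (fwSqa T (j + 1) - fwSqa T j) ^ 2 := by
  intro j hj
  have hv : ∀ k < T, v k ∈ Icc 0 1 := fun k hk => hPsub (hvP k hk)
  obtain ⟨hxj, hxj_le⟩ := fw_iterate_mem_and_le hx0 hv hstep j hj.le
  have hs : 1 ≤ fwSqa T j := one_le_fwSqa hj.le
  obtain ⟨hρ0, hρ1⟩ := fwRatio_mem_Icc hj
  have hnext : x (j + 1) = x j + (1 - fwRatio T j) • (v j - x j) := by
    rw [hstep j hj]
    module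
  have hdescent := le_add_smul_sub_of_smooth hL hsmooth hxj (hv j hj)
    ⟨sub_nonneg.2 hρ1, sub_le_self 1 hρ0⟩
  rw [← hnext, fwRatio_eq hj] at hdescent
  have hgap := hDR.mul_sub_two_mul_le_inner hgrad hFnonneg hxj (hPsub hxstarP)
    (by positivity) (div_le_one_of_le₀ hs (zero_le_one.trans hs)) hxj_le
  have hvstar : ∑ i, gradF (x j) i * (xstar i - x j i) ≤
      ∑ i, gradF (x j) i * (v j i - x j i) := by
    simp only [mul_sub, Finset.sum_sub_distrib]
    linarith [hvmax j hj xstar hxstarP]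
  rw [hE, hE]
  exact lyapunov_increment_ge (by linarith) (fwSqa_le_succ hj) hdescent (hgap.trans hvstar)

/-- With the Lyapunov function `E(t_j) = a_{t_j} F(x(t_j)) - √a_{t_j} F(x*)`,
for every `j < T`,
`E(t_{j+1}) - E(t_j) ≥ √a_{t_j} (√(a_{t_{j+1}}/a_{t_j}) - 1)² (F(x*) - √a_{t_j} F(x(t_j)))
  - (nL/2)(√a_{t_{j+1}} - √a_{t_j})²`. -/
theorem fw_lyapunov_increment_bound
    (n : ℕ) (F : (Fin n → ℝ) → ℝ) (gradF : (Fin n → ℝ) → Fin n → ℝ)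
    (L : ℝ) (hL : 0 ≤ L)
    (hFnonneg : ∀ z ∈ Set.Icc (0 : Fin n → ℝ) 1, 0 ≤ F z)
    (hDR : DRSubmodular F)
    (hgrad : HasGradientOnBox F gradF)
    (hsmooth : ∀ z ∈ Set.Icc (0 : Fin n → ℝ) 1, ∀ w ∈ Set.Icc (0 : Fin n → ℝ) 1,
      |F w - F z - ∑ i, gradF z i * (w i - z i)| ≤ L / 2 * ∑ i, (w i - z i) ^ 2)
    (P : Set (Fin n → ℝ)) (hPsub : P ⊆ Set.Icc 0 1) (hPconv : Convex ℝ P)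
    (h0P : (0 : Fin n → ℝ) ∈ P)
    (xstar : Fin n → ℝ) (hxstarP : xstar ∈ P) (hxstarMax : ∀ z ∈ P, F z ≤ F xstar)
    (T : ℕ) (hT : 1 ≤ T)
    (x v : ℕ → Fin n → ℝ)
    (hx0 : x 0 = 0)
    (hvP : ∀ j < T, v j ∈ P)
    (hvmax : ∀ j < T, ∀ w ∈ P, ∑ i, gradF (x j) i * w i ≤ ∑ i, gradF (x j) i * v j i)
    (hstep : ∀ j < T, x (j + 1) = fwRatio T j • x j + (1 - fwRatio T j) • v j)
    (E : ℕ → ℝ)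
    (hE : ∀ j, E j = fwSqa T j ^ 2 * F (x j) - fwSqa T j * F xstar) :
    ∀ j < T,
      E (j + 1) - E j ≥
        fwSqa T j * (fwSqa T (j + 1) / fwSqa T j - 1) ^ 2 *
            (F xstar - fwSqa T j * F (x j)) -
          (n : ℝ) * L / 2 * (fwSqa T (j + 1) - fwSqa T j) ^ 2 :=
  fw_lyapunov_increment_bound_general n F gradF L hL hFnonneg hDR hgrad hsmooth P hPsub xstar
    hxstarP T x v hx0 hvP hvmax hstep E hE
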